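/- Let p, q, r, s be real numbers with p ≤ s, q ∈ [p,s] and r ∈ [p,s]. Then for all real x, y the following are equivalent: (i) for every n ≥ 1 and every vector v of n positive reals, G_{p,q}(v) ≤ G_{x,y}(v) and G_{x,y}(v) ≤ G_{r,s}(v); (ii) (x,y) ∈ ([p,r] × [q,s]) ∪ ([q,s] × [p,r]). -/

import Mathlib

/-!
With `f t = log ∑ vᵢ ^ t`, one has `log G_{a,b}(v) = dslope f a b`: the secant slope of `f`
between `a` and `b`, or `f' a` when `a = b`. By Hölder's inequality `f` is convex, so this is
monotone in each argument, and `G_{a,b} ≤ G_{c,d}` holds on all vectors as soon as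
`min a b ≤ min c d` and `max a b ≤ max c d`.

These conditions are also necessary. If `max c d < κ < a`, take `K` copies of `e ^ L` and `m`
copies of `1` with `K e ^ (κ L) = m`; then `f t = log m + log (1 + e ^ (L (t - κ)))`, whose
derivative at any point left of `κ` stays bounded as `L → ∞`, while its secants across `κ` grow
like `L`. The condition on the minima follows by `v ↦ v⁻¹`, which sends `G_{a,b}` to
`1 / G_{-a,-b}`. Since `p ≤ q` and `r ≤ s`, the four conditions for (i) say exactly (ii).
-/

open Finset in
/-- Gini mean of a vector of positive reals with real parameters `p`, `q`. -/
noncomputable def gini (p q : ℝ) {n : ℕ} (v : Fin n → ℝ) : ℝ :=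
  if p = q then
    Real.exp ((∑ i, v i ^ p * Real.log (v i)) / ∑ i, v i ^ p)
  else
    ((∑ i, v i ^ p) / ∑ i, v i ^ q) ^ (1 / (p - q))

open Real Finset

theorem dslope_comm {𝕜 E : Type*} [NontriviallyNormedField 𝕜] [NormedAddCommGroup E]
    [NormedSpace 𝕜 E] (f : 𝕜 → E) (a b : 𝕜) : dslope f a b = dslope f b a := by
  rcases eq_or_ne b a with rfl | h
  · rfl
  · rw [dslope_of_ne f h, dslope_of_ne f h.symm, slope_comm]

theorem dslope_comp_neg (f : ℝ → ℝ) (a b : ℝ) :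
    dslope (fun t => f (-t)) a b = -dslope f (-a) (-b) := by
  rcases eq_or_ne b a with rfl | h
  · simp only [dslope_same, deriv_comp_neg]
  · rw [dslope_of_ne _ h, dslope_of_ne _ (neg_injective.ne h), slope_def_field, slope_def_field]
    rw [show -b - -a = -(b - a) by ring, div_neg, neg_neg]

theorem ConvexOn.monotone_dslope {f : ℝ → ℝ} (hf : ConvexOn ℝ Set.univ f)
    (hd : Differentiable ℝ f) (a : ℝ) : Monotone (dslope f a) := by
  intro b b' hbb'
  rcases hbb'.eq_or_lt with rfl | hlt
  · rfl
  rcases eq_or_ne b a with rfl | hb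
  · rw [dslope_same, dslope_of_ne f hlt.ne']
    exact hf.deriv_le_slope trivial trivial hlt (hd b)
  rcases eq_or_ne b' a with rfl | hb'
  · rw [dslope_same, dslope_of_ne f hb, slope_comm]
    exact hf.slope_le_deriv trivial trivial hlt (hd b')
  rw [dslope_of_ne f hb, dslope_of_ne f hb']
  exact hf.slope_mono trivial ⟨trivial, hb⟩ ⟨trivial, hb'⟩ hbb'

section PowerSum

variable {ι : Type*} [Fintype ι] {v : ι → ℝ}

noncomputable def logPowerSum (v : ι → ℝ) (t : ℝ) : ℝ := log (∑ i, v i ^ t)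

theorem sum_rpow_pos [Nonempty ι] (hv : ∀ i, 0 < v i) (t : ℝ) : 0 < ∑ i, v i ^ t :=
  sum_pos (fun i _ => rpow_pos_of_pos (hv i) t) univ_nonempty

theorem hasDerivAt_logPowerSum [Nonempty ι] (hv : ∀ i, 0 < v i) (t : ℝ) :
    HasDerivAt (logPowerSum v) ((∑ i, v i ^ t * log (v i)) / ∑ i, v i ^ t) t :=
  (HasDerivAt.fun_sum fun i _ => (hasStrictDerivAt_const_rpow (hv i) t).hasDerivAt).log
    (sum_rpow_pos hv t).ne'

theorem differentiable_logPowerSum [Nonempty ι] (hv : ∀ i, 0 < v i) :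
    Differentiable ℝ (logPowerSum v) :=
  fun t => (hasDerivAt_logPowerSum hv t).differentiableAt

theorem convexOn_logPowerSum [Nonempty ι] (hv : ∀ i, 0 < v i) :
    ConvexOn ℝ Set.univ (logPowerSum v) := by
  refine convexOn_iff_forall_pos.2 ⟨convex_univ, fun x _ y _ a b ha hb hab => ?_⟩
  have hpow : ∀ (c t : ℝ), 0 < c → ∀ i, (v i ^ (c * t)) ^ c⁻¹ = v i ^ t := fun c t hc i => by
    rw [← rpow_mul (hv i).le, mul_comm c, mul_assoc, mul_inv_cancel₀ hc.ne', mul_one]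
  have holder := inner_le_Lp_mul_Lq_of_nonneg univ (HolderConjugate.inv_inv ha hb hab)
    (f := fun i => v i ^ (a * x)) (g := fun i => v i ^ (b * y))
    (fun i _ => (rpow_pos_of_pos (hv i) _).le) (fun i _ => (rpow_pos_of_pos (hv i) _).le)
  simp only [hpow a x ha, hpow b y hb, one_div, inv_inv, ← rpow_add (hv _)] at holder
  simp only [logPowerSum, smul_eq_mul]
  calc log (∑ i, v i ^ (a * x + b * y))
      ≤ log ((∑ i, v i ^ x) ^ a * (∑ i, v i ^ y) ^ b) := log_le_log (sum_rpow_pos hv _) holder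
    _ = a * log (∑ i, v i ^ x) + b * log (∑ i, v i ^ y) := by
      rw [log_mul (rpow_pos_of_pos (sum_rpow_pos hv x) a).ne'
        (rpow_pos_of_pos (sum_rpow_pos hv y) b).ne', log_rpow (sum_rpow_pos hv x),
        log_rpow (sum_rpow_pos hv y)]

theorem logPowerSum_inv (hv : ∀ i, 0 < v i) : logPowerSum v⁻¹ = fun t => logPowerSum v (-t) := by
  funext t
  simp only [logPowerSum, Pi.inv_apply, inv_rpow (hv _).le, rpow_neg (hv _).le]

end PowerSum

section Gini

variable {n : ℕ} [NeZero n] {v : Fin n → ℝ}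

theorem gini_eq_exp_dslope (hv : ∀ i, 0 < v i) (a b : ℝ) :
    gini a b v = exp (dslope (logPowerSum v) a b) := by
  rcases eq_or_ne a b with rfl | hab
  · rw [gini, if_pos rfl, dslope_same, (hasDerivAt_logPowerSum hv a).deriv]
  · rw [gini, if_neg hab, dslope_of_ne _ (Ne.symm hab), slope_comm, slope_def_field,
      rpow_def_of_pos (div_pos (sum_rpow_pos hv a) (sum_rpow_pos hv b)),
      log_div (sum_rpow_pos hv a).ne' (sum_rpow_pos hv b).ne', logPowerSum, logPowerSum,
      mul_one_div]

theorem gini_pos (hv : ∀ i, 0 < v i) (a b : ℝ) : 0 < gini a b v := by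
  rw [gini_eq_exp_dslope hv]
  exact exp_pos _

theorem gini_comm (hv : ∀ i, 0 < v i) (a b : ℝ) : gini a b v = gini b a v := by
  rw [gini_eq_exp_dslope hv, gini_eq_exp_dslope hv, dslope_comm]

theorem gini_le_gini (hv : ∀ i, 0 < v i) {a a' b b' : ℝ} (ha : a ≤ a') (hb : b ≤ b') :
    gini a b v ≤ gini a' b' v := by
  have mono := (convexOn_logPowerSum hv).monotone_dslope (differentiable_logPowerSum hv)
  rw [gini_eq_exp_dslope hv, gini_eq_exp_dslope hv, exp_le_exp]
  calc dslope (logPowerSum v) a b ≤ dslope (logPowerSum v) a b' := mono a hb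
    _ = dslope (logPowerSum v) b' a := dslope_comm ..
    _ ≤ dslope (logPowerSum v) b' a' := mono b' ha
    _ = dslope (logPowerSum v) a' b' := dslope_comm ..

theorem gini_min_max (hv : ∀ i, 0 < v i) (a b : ℝ) : gini (min a b) (max a b) v = gini a b v := by
  rcases le_total a b with h | h
  · rw [min_eq_left h, max_eq_right h]
  · rw [min_eq_right h, max_eq_left h, gini_comm hv]

theorem gini_inv (hv : ∀ i, 0 < v i) (a b : ℝ) : gini a b v⁻¹ = (gini (-a) (-b) v)⁻¹ := by
  have hv' : ∀ i, 0 < v⁻¹ i := fun i => inv_pos.2 (hv i)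
  rw [gini_eq_exp_dslope hv', gini_eq_exp_dslope hv, logPowerSum_inv hv,
    dslope_comp_neg, exp_neg]

end Gini

theorem exists_pos_nat_le_log_div {c : ℝ} (hc : 0 < c) (L₀ : ℝ) :
    ∃ N : ℕ, 0 < N ∧ L₀ ≤ log N / c := by
  refine ⟨⌈exp (c * L₀)⌉₊, Nat.ceil_pos.2 (exp_pos _), ?_⟩
  rw [le_div_iff₀ hc]
  calc L₀ * c = log (exp (c * L₀)) := by rw [log_exp, mul_comm]
    _ ≤ log ⌈exp (c * L₀)⌉₊ := log_le_log (exp_pos _) (Nat.le_ceil _)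

theorem exists_nat_mul_exp_eq (κ L₀ : ℝ) :
    ∃ K m : ℕ, 0 < K ∧ 0 < m ∧ ∃ L ≥ L₀, K * exp (κ * L) = m := by
  rcases lt_trichotomy κ 0 with hκ | rfl | hκ
  · obtain ⟨N, hN, hL⟩ := exists_pos_nat_le_log_div (neg_pos.2 hκ) L₀
    refine ⟨N, 1, hN, one_pos, _, hL, ?_⟩
    have hN' : (0 : ℝ) < N := by exact_mod_cast hN
    have hκL : κ * (log N / -κ) = -log N := by rw [div_neg, mul_neg, mul_div_cancel₀ _ hκ.ne]
    rw [hκL, exp_neg, exp_log hN', Nat.cast_one, mul_inv_cancel₀ hN'.ne']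
  · exact ⟨1, 1, one_pos, one_pos, L₀, le_rfl, by simp⟩
  · obtain ⟨N, hN, hL⟩ := exists_pos_nat_le_log_div hκ L₀
    refine ⟨1, N, one_pos, hN, _, hL, ?_⟩
    rw [mul_div_cancel₀ _ hκ.ne', exp_log (by exact_mod_cast hN), Nat.cast_one, one_mul]

noncomputable def twoLevel (K m : ℕ) (L : ℝ) : Fin (K + m) → ℝ :=
  Fin.append (fun _ => exp L) (fun _ => 1)

section TwoLevel

variable {K m : ℕ} {L : ℝ}

theorem twoLevel_pos (i : Fin (K + m)) : 0 < twoLevel K m L i := by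
  refine Fin.addCases (fun _ => ?_) (fun _ => ?_) i <;> simp [twoLevel, exp_pos]

theorem sum_twoLevel_rpow (t : ℝ) : ∑ i, twoLevel K m L i ^ t = K * exp (L * t) + m := by
  simp [twoLevel, Fin.sum_univ_add, ← exp_mul]

theorem sum_twoLevel_rpow_mul_log (t : ℝ) :
    ∑ i, twoLevel K m L i ^ t * log (twoLevel K m L i) = K * exp (L * t) * L := by
  simp [twoLevel, Fin.sum_univ_add, ← exp_mul, mul_assoc]

variable {κ : ℝ}

theorem gini_self_twoLevel_lt (hK : 0 < K) (hKm : K * exp (κ * L) = m) (hL : 0 < L) {e : ℝ}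
    (he : e < κ) : gini e e (twoLevel K m L) < exp (κ - e)⁻¹ := by
  rw [gini, if_pos rfl, sum_twoLevel_rpow, sum_twoLevel_rpow_mul_log, exp_lt_exp]
  have hu : 0 < (K : ℝ) * exp (L * e) := by positivity
  have hδ : 0 < κ - e := sub_pos.2 he
  calc K * exp (L * e) * L / (K * exp (L * e) + m)
      < K * exp (L * e) * L / m := by
        gcongr
        · rw [← hKm]; positivity
        · linarith
    _ = L / exp ((κ - e) * L) := by
        rw [← hKm, sub_mul, exp_sub]; field_simp
    _ < (κ - e)⁻¹ := by
        rw [div_lt_iff₀ (exp_pos _), inv_mul_eq_div, lt_div_iff₀ hδ]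
        linarith [add_one_le_exp ((κ - e) * L)]

theorem exp_le_gini_twoLevel (hm : 0 < m) (hKm : K * exp (κ * L) = m) (hL : 0 < L)
    {A B : ℝ} (hB : B < κ) (hA : κ < A) :
    exp ((L * (A - κ) - log 2) / (A - B)) ≤ gini A B (twoLevel K m L) := by
  have : NeZero (K + m) := NeZero.of_pos (by omega)
  have hv : ∀ i, 0 < twoLevel K m L i := twoLevel_pos
  have hm' : (0 : ℝ) < m := by exact_mod_cast hm
  rw [gini_eq_exp_dslope hv, exp_le_exp, dslope_of_ne _ (hB.trans hA).ne, slope_comm,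
    slope_def_field, logPowerSum, logPowerSum, sum_twoLevel_rpow, sum_twoLevel_rpow]
  refine div_le_div_of_nonneg_right ?_ (by linarith)
  have hA' : log m + L * (A - κ) ≤ log (K * exp (L * A) + m) := by
    rw [← log_exp (L * (A - κ)), ← log_mul hm'.ne' (exp_pos _).ne']
    refine log_le_log (by positivity) ?_
    rw [← hKm, mul_assoc, ← exp_add]
    ring_nf
    linarith
  have hB' : log (K * exp (L * B) + m) ≤ log 2 + log m := by
    rw [← log_mul two_ne_zero hm'.ne']
    refine log_le_log (by positivity) ?_
    have : (K : ℝ) * exp (L * B) ≤ m := by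
      rw [← hKm]
      gcongr ?_ * exp ?_
      nlinarith
    linarith
  linarith

end TwoLevel

theorem exists_gini_self_lt_gini {κ e A B : ℝ} (hB : B < κ) (he : e < κ) (hA : κ < A) :
    ∃ n, 1 ≤ n ∧ ∃ v : Fin n → ℝ, (∀ i, 0 < v i) ∧ gini e e v < gini A B v := by
  have hAκ : 0 < A - κ := sub_pos.2 hA
  have hAB : 0 < A - B := by linarith
  have hκe : 0 < κ - e := sub_pos.2 he
  obtain ⟨K, m, hK, hm, L, hL, hKm⟩ :=
    exists_nat_mul_exp_eq κ (((A - B) / (κ - e) + log 2) / (A - κ))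
  rw [ge_iff_le, div_le_iff₀ hAκ] at hL
  have hL₀ : 0 < L :=
    pos_of_mul_pos_left (by linarith [div_pos hAB hκe, log_pos one_lt_two]) hAκ.le
  refine ⟨K + m, by omega, twoLevel K m L, twoLevel_pos, ?_⟩
  calc gini e e (twoLevel K m L) < exp (κ - e)⁻¹ := gini_self_twoLevel_lt hK hKm hL₀ he
    _ ≤ exp ((L * (A - κ) - log 2) / (A - B)) := by
        rw [exp_le_exp, le_div_iff₀ hAB, inv_mul_eq_div]
        linarith
    _ ≤ gini A B (twoLevel K m L) := exp_le_gini_twoLevel hm hKm hL₀ hB hA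

def GiniLE (a b c d : ℝ) : Prop :=
  ∀ n : ℕ, 1 ≤ n → ∀ v : Fin n → ℝ, (∀ i, 0 < v i) → gini a b v ≤ gini c d v

namespace GiniLE

variable {a b c d : ℝ}

theorem comm_left (h : GiniLE a b c d) : GiniLE b a c d := fun n hn v hv => by
  have : NeZero n := ⟨by omega⟩
  rw [gini_comm hv]
  exact h n hn v hv

theorem le_max (h : GiniLE a b c d) : a ≤ max c d := by
  by_contra! hlt
  obtain ⟨κ, hκ, hκa⟩ := exists_between hlt
  obtain ⟨n, hn, v, hv, hgap⟩ :=
    exists_gini_self_lt_gini (B := min b (κ - 1)) ((min_le_right _ _).trans_lt (by linarith))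
      hκ hκa
  have : NeZero n := ⟨by omega⟩
  have hab : gini a (min b (κ - 1)) v ≤ gini a b v := gini_le_gini hv le_rfl (min_le_left _ _)
  have hcd : gini c d v ≤ gini (max c d) (max c d) v :=
    gini_le_gini hv (le_max_left _ _) (le_max_right _ _)
  linarith [h n hn v hv]

theorem max_le (h : GiniLE a b c d) : max a b ≤ max c d :=
  _root_.max_le h.le_max h.comm_left.le_max

theorem neg (h : GiniLE a b c d) : GiniLE (-c) (-d) (-a) (-b) := fun n hn v hv => by
  have : NeZero n := ⟨by omega⟩
  have hinv := h n hn v⁻¹ fun i => inv_pos.2 (hv i)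
  rwa [gini_inv hv, gini_inv hv, inv_le_inv₀ (gini_pos hv _ _) (gini_pos hv _ _)] at hinv

theorem min_le (h : GiniLE a b c d) : min a b ≤ min c d := by
  simpa [max_neg_neg] using h.neg.max_le

end GiniLE

theorem giniLE_iff {a b c d : ℝ} : GiniLE a b c d ↔ max a b ≤ max c d ∧ min a b ≤ min c d := by
  refine ⟨fun h => ⟨h.max_le, h.min_le⟩, fun ⟨hmax, hmin⟩ n hn v hv => ?_⟩
  have : NeZero n := ⟨by omega⟩
  rw [← gini_min_max hv a b, ← gini_min_max hv c d]
  exact gini_le_gini hv hmin hmax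

theorem stmt_2_general (p q r s : ℝ) (hq : q ∈ Set.Icc p s) (hr : r ∈ Set.Icc p s)
    (x y : ℝ) :
    (∀ n : ℕ, 1 ≤ n → ∀ v : Fin n → ℝ, (∀ i, 0 < v i) →
        gini p q v ≤ gini x y v ∧ gini x y v ≤ gini r s v) ↔
      (x, y) ∈ (Set.Icc p r ×ˢ Set.Icc q s) ∪ (Set.Icc q s ×ˢ Set.Icc p r) := by
  obtain ⟨hpq, -⟩ := hq
  obtain ⟨-, hrs⟩ := hr
  simp only [imp_and, forall_and]
  change GiniLE p q x y ∧ GiniLE x y r s ↔ _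
  rw [giniLE_iff, giniLE_iff, max_eq_right hpq, min_eq_left hpq, max_eq_right hrs,
    min_eq_left hrs]
  simp only [Set.mem_union, Set.mem_prod, Set.mem_Icc]
  grind

/-- if p ≤ s, q ∈ [p,s], r ∈ [p,s], then for all real x, y the mean
G_{x,y} lies (pointwise, on all vectors of positive reals) between G_{p,q} and
G_{r,s} if and only if (x,y) ∈ ([p,r] × [q,s]) ∪ ([q,s] × [p,r]). -/
theorem stmt_2 (p q r s : ℝ) (hps : p ≤ s) (hq : q ∈ Set.Icc p s) (hr : r ∈ Set.Icc p s)
    (x y : ℝ) :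
    (∀ n : ℕ, 1 ≤ n → ∀ v : Fin n → ℝ, (∀ i, 0 < v i) →
        gini p q v ≤ gini x y v ∧ gini x y v ≤ gini r s v) ↔
      (x, y) ∈ (Set.Icc p r ×ˢ Set.Icc q s) ∪ (Set.Icc q s ×ˢ Set.Icc p r) :=
  stmt_2_general p q r s hq hr x y
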